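/- arXiv:2305.19798 — 3 statements merged into one kernel-verified Lean document; each statement's English description precedes it below -/
import Mathlib

section
/- Let K ∈ ℝ^{N×N}, let H_e, H_r ∈ ℝ^{N×s}, and let Σ ∈ ℝ^{s×s} be a diagonal matrix with positive diagonal entries σ_1,…,σ_s, satisfying K H_r = H_e Σ and K^⊤ H_e = H_r Σ. Then the KSVD primal objective J = (1/2)·Tr(H_e Σ H_e^⊤) + (1/2)·Tr(H_r Σ H_r^⊤) − Tr(H_e^⊤ K H_r) equals zero. -/
open Matrix

/-! Each stationarity condition turns the coupling term `Tr(H_eᵀ K H_r)` into one of the two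
regularization terms, so `J = ½ c + ½ c − c = 0` with `c = Tr(H_eᵀ K H_r)`. -/

namespace Matrix

variable {m n k R : Type*} [Fintype m] [Fintype n] [Fintype k] [CommSemiring R]

theorem trace_transpose_mul_mul_eq_of_mul_eq {K : Matrix m n R} {A : Matrix m k R}
    {B : Matrix n k R} {D : Matrix k k R} (h : K * B = A * D) :
    trace (Aᵀ * K * B) = trace (A * D * Aᵀ) := by
  rw [Matrix.mul_assoc, h, trace_mul_comm]

theorem trace_transpose_mul_mul_eq_of_transpose_mul_eq {K : Matrix m n R} {A : Matrix m k R}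
    {B : Matrix n k R} {D : Matrix k k R} (h : Kᵀ * A = B * D) :
    trace (Aᵀ * K * B) = trace (B * D * Bᵀ) := by
  rw [← trace_transpose_mul_mul_eq_of_mul_eq h, ← trace_transpose, transpose_mul, transpose_mul,
    transpose_transpose, Matrix.mul_assoc]

end Matrix

theorem ksvd_zero_objective_general
    (N s : ℕ) (K : Matrix (Fin N) (Fin N) ℝ)
    (He Hr : Matrix (Fin N) (Fin s) ℝ) (σ : Fin s → ℝ)
    (h1 : K * Hr = He * Matrix.diagonal σ)
    (h2 : Kᵀ * He = Hr * Matrix.diagonal σ) :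
    (1 / 2 : ℝ) * Matrix.trace (He * Matrix.diagonal σ * Heᵀ)
      + (1 / 2 : ℝ) * Matrix.trace (Hr * Matrix.diagonal σ * Hrᵀ)
      - Matrix.trace (Heᵀ * K * Hr) = 0 := by
  have he := trace_transpose_mul_mul_eq_of_mul_eq h1
  have hr := trace_transpose_mul_mul_eq_of_transpose_mul_eq h2
  linarith

/-- Zero-value objective lemma: at any stationary solution `(H_e, H_r, Σ)` of the KSVD
dual shifted eigenvalue problem, the primal objective
`J = (1/2)Tr(H_e Σ H_eᵀ) + (1/2)Tr(H_r Σ H_rᵀ) − Tr(H_eᵀ K H_r)` equals zero. -/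
theorem ksvd_zero_objective
    (N s : ℕ) (K : Matrix (Fin N) (Fin N) ℝ)
    (He Hr : Matrix (Fin N) (Fin s) ℝ) (σ : Fin s → ℝ) (hσ : ∀ l, 0 < σ l)
    (h1 : K * Hr = He * Matrix.diagonal σ)
    (h2 : Kᵀ * He = Hr * Matrix.diagonal σ) :
    (1 / 2 : ℝ) * Matrix.trace (He * Matrix.diagonal σ * Heᵀ)
      + (1 / 2 : ℝ) * Matrix.trace (Hr * Matrix.diagonal σ * Hrᵀ)
      - Matrix.trace (Heᵀ * K * Hr) = 0 :=
  ksvd_zero_objective_general N s K He Hr σ h1 h2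
end

section
/- Let Φ_q, Φ_k ∈ ℝ^{N×p} be two feature matrices, and define the asymmetric kernel matrix K ∈ ℝ^{N×N} by K = Φ_q Φ_k^⊤. Suppose the primal variables W_e, W_r ∈ ℝ^{p×s}, scores E, R ∈ ℝ^{N×s}, and dual variables H_e, H_r ∈ ℝ^{N×s} together with a positive diagonal Λ ∈ ℝ^{s×s} satisfy the KKT conditions: W_r = Φ_q^⊤ H_e, W_e = Φ_k^⊤ H_r, E Λ = H_e, R Λ = H_r, E = Φ_q W_e, R = Φ_k W_r. Then K H_r = H_e Λ^{-1} and K^⊤ H_e = H_r Λ^{-1}. -/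
open Matrix

/-- Dual shifted eigenvalue problem of KSVD in self-attention (data-independent case):
eliminating the primal variables from the KKT conditions yields `K H_r = H_e Λ⁻¹` and
`Kᵀ H_e = H_r Λ⁻¹` for the asymmetric kernel `K = Φ_q Φ_kᵀ`. -/
theorem ksvd_dual_shifted_eigenvalue_problem
    (N p s : ℕ) (Φq Φk : Matrix (Fin N) (Fin p) ℝ)
    (We Wr : Matrix (Fin p) (Fin s) ℝ)
    (E R He Hr : Matrix (Fin N) (Fin s) ℝ)
    (lam : Fin s → ℝ) (hlam : ∀ l, 0 < lam l)
    (hWr : Wr = Φqᵀ * He) (hWe : We = Φkᵀ * Hr)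
    (hE : E * Matrix.diagonal lam = He) (hR : R * Matrix.diagonal lam = Hr)
    (hEdef : E = Φq * We) (hRdef : R = Φk * Wr) :
    (Φq * Φkᵀ) * Hr = He * (Matrix.diagonal lam)⁻¹ ∧
    (Φq * Φkᵀ)ᵀ * He = Hr * (Matrix.diagonal lam)⁻¹ := by
  have hdet : (Matrix.diagonal lam).det ≠ 0 := by
    rw [Matrix.det_diagonal]
    exact Finset.prod_ne_zero_iff.mpr fun l _ => (hlam l).ne'
  have hinv : Matrix.diagonal lam * (Matrix.diagonal lam)⁻¹ = 1 :=
    Matrix.mul_nonsing_inv _ (isUnit_iff_ne_zero.mpr hdet)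
  constructor
  · calc (Φq * Φkᵀ) * Hr = Φq * (Φkᵀ * Hr) := by rw [Matrix.mul_assoc]
    _ = E := by rw [← hWe, ← hEdef]
    _ = E * (Matrix.diagonal lam * (Matrix.diagonal lam)⁻¹) := by rw [hinv, Matrix.mul_one]
    _ = He * (Matrix.diagonal lam)⁻¹ := by rw [← Matrix.mul_assoc, hE]
  · calc (Φq * Φkᵀ)ᵀ * He = Φk * (Φqᵀ * He) := by rw [Matrix.transpose_mul, Matrix.transpose_transpose, Matrix.mul_assoc]
    _ = R := by rw [← hWr, ← hRdef]
    _ = R * (Matrix.diagonal lam * (Matrix.diagonal lam)⁻¹) := by rw [hinv, Matrix.mul_one]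
    _ = Hr * (Matrix.diagonal lam)⁻¹ := by rw [← Matrix.mul_assoc, hR]
end

section
/- Let K ∈ ℝ^{N×N}, H_e, H_r ∈ ℝ^{N×s}, and diagonal Σ ∈ ℝ^{s×s} with positive entries satisfy K H_r = H_e Σ and K^⊤ H_e = H_r Σ. Then for every column index l, ‖H_e[:,l]‖ = ‖H_r[:,l]‖, i.e., corresponding columns of H_e and H_r have equal Euclidean norms. -/
open Matrix

theorem mulVec_col_eq_smul_col_of_mul_eq_mul_diagonal {R m n k : Type*} [CommSemiring R]
    [Fintype n] [Fintype k] [DecidableEq k] {A : Matrix m n R} {B : Matrix n k R}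
    {C : Matrix m k R} {d : k → R} (h : A * B = C * diagonal d) (l : k) :
    A *ᵥ (fun i => B i l) = d l • fun i => C i l := by
  funext i
  calc (A *ᵥ fun i => B i l) i = (A * B) i l := rfl
    _ = d l * C i l := by rw [h, mul_diagonal, mul_comm]

theorem dotProduct_self_eq_of_mulVec_eq_smul {R m n : Type*} [CommRing R] [IsDomain R]
    [Fintype m] [Fintype n] {A : Matrix m n R} {u : m → R} {v : n → R} {c : R} (hc : c ≠ 0)
    (hv : A *ᵥ v = c • u) (hu : Aᵀ *ᵥ u = c • v) : u ⬝ᵥ u = v ⬝ᵥ v := by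
  refine mul_left_cancel₀ hc ?_
  calc c * (u ⬝ᵥ u) = u ⬝ᵥ (A *ᵥ v) := by rw [hv, dotProduct_smul, smul_eq_mul]
    _ = (Aᵀ *ᵥ u) ⬝ᵥ v := by rw [dotProduct_mulVec, mulVec_transpose]
    _ = c * (v ⬝ᵥ v) := by rw [hu, smul_dotProduct, smul_eq_mul]

/-- Matrix form of the equal-norm property: at a stationary solution of the KSVD
shifted eigenvalue problem, corresponding columns of `H_e` and `H_r` have equal
Euclidean norms. -/
theorem ksvd_columns_equal_norms
    (N s : ℕ) (K : Matrix (Fin N) (Fin N) ℝ)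
    (He Hr : Matrix (Fin N) (Fin s) ℝ) (σ : Fin s → ℝ) (hσ : ∀ l, 0 < σ l)
    (h1 : K * Hr = He * Matrix.diagonal σ)
    (h2 : Kᵀ * He = Hr * Matrix.diagonal σ) :
    ∀ l : Fin s,
      Real.sqrt ((fun i => He i l) ⬝ᵥ (fun i => He i l)) =
      Real.sqrt ((fun i => Hr i l) ⬝ᵥ (fun i => Hr i l)) := fun l => by
  rw [dotProduct_self_eq_of_mulVec_eq_smul (hσ l).ne'
    (mulVec_col_eq_smul_col_of_mul_eq_mul_diagonal h1 l)
    (mulVec_col_eq_smul_col_of_mul_eq_mul_diagonal h2 l)]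
end
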